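/- Conjunctive Monotonicity Lemma, part (ii): Let U_1 and U_2 be two TA templates with conjunctive guards, let Φ(1_1) be an IMTL formula over the first instance of U_1, and let Q ∈ {E, E_inf, E_fin}. Then for any n ∈ ℕ with n ≥ 1: if (U_1,U_2)^{(1,n)} ⊨ Q Φ(1_1) then (U_1,U_2)^{(1,n+1)} ⊨ Q Φ(1_1). -/

import Mathlib

open scoped ENNReal NNReal

namespace PNTA

/-! ### Basic ingredients: comparisons and clock constraints -/

/-- Comparison operators `<, ≤, >, ≥, =`. -/
inductive Cmp : Type
  | lt | le | gt | ge | eq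

/-- Evaluation of a comparison operator on nonnegative reals. -/
def Cmp.eval : Cmp → NNReal → NNReal → Prop
  | .lt, a, b => a < b
  | .le, a, b => a ≤ b
  | .gt, a, b => b < a
  | .ge, a, b => b ≤ a
  | .eq, a, b => a = b

/-- Clock constraints `TC(C)`: Boolean combinations of comparisons of clocks with
clocks or with nonnegative rational constants. -/
inductive ClockConstraint (C : Type) : Type
  | tt
  | neg (g : ClockConstraint C)
  | disj (g₁ g₂ : ClockConstraint C)
  | cmpClock (op : Cmp) (c₁ c₂ : C)
  | cmpConst (op : Cmp) (c : C) (q : ℚ≥0)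

/-- Satisfaction of a clock constraint by a clock valuation. -/
def ClockConstraint.sat {C : Type} (u : C → NNReal) : ClockConstraint C → Prop
  | .tt => True
  | .neg g => ¬ g.sat u
  | .disj g₁ g₂ => g₁.sat u ∨ g₂.sat u
  | .cmpClock op c₁ c₂ => op.eval (u c₁) (u c₂)
  | .cmpConst op c q => op.eval (u c) (q : NNReal)

/-! ### Parameterized networks of timed automata with conjunctive guards -/

/-- A parameterized network of `k` timed automaton templates
`U_l = ⟨S_l, ŝ_l, C_l, Γ_l, τ_l, I_l⟩` with **conjunctive guards**.
A conjunctive guard assigns to every template `h` a set of states of `U_h`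
(the disjunction `ŝ_h ∨ s_h¹ ∨ ⋯`), which must contain the initial state `ŝ_h`;
it is satisfied by a global state when every *other* instance of every template `h`
is in a state belonging to the corresponding set. -/
structure ConjPNTA (k : ℕ) : Type 1 where
  /-- states of each template -/
  State : Fin k → Type
  stateFintype : ∀ l, Fintype (State l)
  /-- initial state of each template -/
  init : ∀ l, State l
  /-- clock variables of each template -/
  Clock : Fin k → Type
  clockFintype : ∀ l, Fintype (Clock l)
  /-- transitions `s —(g,r,γ)→ t`: source, clock constraint, reset set, conjunctive guard, target -/
  trans : ∀ l, Set (State l × ClockConstraint (Clock l) × Set (Clock l) ×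
      ((h : Fin k) → Set (State h)) × State l)
  trans_finite : ∀ l, (trans l).Finite
  /-- guards are conjunctive: every disjunct contains the initial state -/
  guards_conj : ∀ l tr, tr ∈ trans l → ∀ h, init h ∈ tr.2.2.2.1 h
  /-- state invariants -/
  inv : ∀ l, State l → ClockConstraint (Clock l)
  inv_init : ∀ l, inv l (init l) = ClockConstraint.tt

variable {k : ℕ}

/-- `|U_l|`: the number of states of template `l`. -/
def ConjPNTA.size (A : ConjPNTA k) (l : Fin k) : ℕ :=
  @Fintype.card (A.State l) (A.stateFintype l)

lemma ConjPNTA.size_pos (A : ConjPNTA k) (l : Fin k) : 0 < A.size l :=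
  @Fintype.card_pos _ (A.stateFintype l) ⟨A.init l⟩

/-- A configuration of the PNTA `(U_1,…,U_k)^{(n_1,…,n_k)}`: each instance `U_l^i`
(`l < k`, `i < n_l`) has a current state and a clock valuation satisfying the
invariant of that state. -/
structure Config (A : ConjPNTA k) (n : Fin k → ℕ) : Type where
  st : ∀ l, Fin (n l) → A.State l
  cl : ∀ l, Fin (n l) → A.Clock l → NNReal
  inv_sat : ∀ l i, (A.inv l (st l i)).sat (cl l i)

/-- The initial configuration: every instance in its initial state, all clocks `0`. -/
def initConfig (A : ConjPNTA k) (n : Fin k → ℕ) : Config A n where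
  st := fun l _ => A.init l
  cl := fun _ _ _ => 0
  inv_sat := fun l _ => by rw [A.inv_init l]; exact trivial

/-- The global state of configuration `c` satisfies the conjunctive guard `γ`
from the point of view of instance `(l, i)`: every other instance is in one of
the allowed states. -/
def guardSat {A : ConjPNTA k} {n : Fin k → ℕ} (c : Config A n) (l : Fin k) (i : Fin (n l))
    (γ : (h : Fin k) → Set (A.State h)) : Prop :=
  ∀ p : Σ h, Fin (n h), p ≠ ⟨l, i⟩ → c.st p.1 p.2 ∈ γ p.1

/-- Delay transition `c →d c'`: all clocks of all instances advance by `d`,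
states are unchanged, and all invariants hold throughout the delay. -/
def DelayStep {A : ConjPNTA k} {n : Fin k → ℕ} (d : NNReal) (c c' : Config A n) : Prop :=
  c'.st = c.st ∧
  (∀ l i x, c'.cl l i x = c.cl l i x + d) ∧
  (∀ l i (d' : NNReal), d' ≤ d → (A.inv l (c.st l i)).sat fun x => c.cl l i x + d')

/-- Synchronization transition `c →γ c'`: exactly one instance `U_l^i` fires a
transition `s —(g,r,γ)→ t` of `τ_l`; its current state is `s`, its clocks satisfy `g`,
the global state satisfies the conjunctive guard `γ`, its clocks in `r` are reset to 0,
and all other instances are unchanged. -/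
def SyncStep {A : ConjPNTA k} {n : Fin k → ℕ} (c c' : Config A n) : Prop :=
  ∃ (l : Fin k) (i : Fin (n l)), ∃ tr ∈ A.trans l,
    tr.1 = c.st l i ∧
    tr.2.1.sat (c.cl l i) ∧
    guardSat c l i tr.2.2.2.1 ∧
    c'.st l i = tr.2.2.2.2 ∧
    (∀ x, (x ∈ tr.2.2.1 → c'.cl l i x = 0) ∧ (x ∉ tr.2.2.1 → c'.cl l i x = c.cl l i x)) ∧
    (∀ p : Σ h, Fin (n h), p ≠ ⟨l, i⟩ → c'.st p.1 p.2 = c.st p.1 p.2 ∧ c'.cl p.1 p.2 = c.cl p.1 p.2)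

/-- A step of a timed computation: a delay transition with positive delay
(time advances accordingly) or a synchronization transition (time unchanged). -/
def Step {A : ConjPNTA k} {n : Fin k → ℕ} (c c' : Config A n) (t t' : NNReal) : Prop :=
  (∃ d : NNReal, 0 < d ∧ DelayStep d c c' ∧ t' = t + d) ∨ (SyncStep c c' ∧ t' = t)

/-- A timed computation starting at configuration `c₀` at time `0`: a finite or
infinite sequence of configuration/time pairs (represented as a partial function
on positions with downward closed domain) whose consecutive elements are related
by delay or synchronization transitions. -/
structure TimedComp (A : ConjPNTA k) (n : Fin k → ℕ) (c₀ : Config A n) : Type where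
  seq : ℕ → Option (Config A n × NNReal)
  zero_def : seq 0 = some (c₀, 0)
  downward : ∀ v, (seq (v + 1)).isSome → (seq v).isSome
  step : ∀ v c t c' t', seq v = some (c, t) → seq (v + 1) = some (c', t') → Step c c' t t'

namespace TimedComp

variable {A : ConjPNTA k} {n : Fin k → ℕ} {c₀ : Config A n}

/-- An infinite timed computation. -/
def Infinite (x : TimedComp A n c₀) : Prop := ∀ v, (x.seq v).isSome

/-- A (not necessarily maximal) finite timed computation. -/
def Finite (x : TimedComp A n c₀) : Prop := ∃ v, x.seq v = none

/-- A deadlocked timed computation: maximal finite, i.e. all transitions are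
disabled at its final configuration. -/
def Deadlocked (x : TimedComp A n c₀) : Prop :=
  ∃ v c t, x.seq v = some (c, t) ∧ x.seq (v + 1) = none ∧
    ∀ c' : Config A n, ¬ ((∃ d : NNReal, 0 < d ∧ DelayStep d c c') ∨ SyncStep c c')

/-- The time stamp at position `v` (junk value `0` outside the domain). -/
def timeAt (x : TimedComp A n c₀) (v : ℕ) : NNReal := ((x.seq v).map Prod.snd).getD 0

end TimedComp

/-! ### s-paths (continuous-time signals induced by timed computations) -/

/-- An s-path: a continuous-time signal of configurations, together with its
(possibly infinite) length. -/
structure SPath (A : ConjPNTA k) (n : Fin k → ℕ) : Type where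
  len : ℝ≥0∞
  toFun : NNReal → Config A n

/-- The suffix `ρ⌊t` of an s-path. -/
noncomputable def SPath.suffix {A : ConjPNTA k} {n : Fin k → ℕ} (ρ : SPath A n) (t : NNReal) : SPath A n where
  len := ρ.len - (t : ℝ≥0∞)
  toFun := fun s => ρ.toFun (t + s)

/-- The timed computation `x` induces the s-path `ρ`: for every step of `x` from
`(c_v,t_v)` to `(c_{v+1},t_{v+1})` and every time `s ∈ [t_v, t_{v+1})`, `ρ(s)` has
the states of `c_v` with clocks advanced by `s - t_v`; the length of `ρ` is the
supremum of the time stamps (for an infinite computation), resp. the final time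
stamp (for a finite one, at which the final configuration persists). -/
def Induces {A : ConjPNTA k} {n : Fin k → ℕ} {c₀ : Config A n}
    (x : TimedComp A n c₀) (ρ : SPath A n) : Prop :=
  (∀ v c t c' t', x.seq v = some (c, t) → x.seq (v + 1) = some (c', t') →
    ∀ s : NNReal, t ≤ s → s < t' →
      (ρ.toFun s).st = c.st ∧ ∀ l i cx, (ρ.toFun s).cl l i cx = c.cl l i cx + (s - t)) ∧
  (x.Infinite → ρ.len = ⨆ v, (x.timeAt v : ℝ≥0∞)) ∧
  (∀ v c t, x.seq v = some (c, t) → x.seq (v + 1) = none →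
    ρ.len = (t : ℝ≥0∞) ∧ (ρ.toFun t).st = c.st ∧ ∀ l i cx, (ρ.toFun t).cl l i cx = c.cl l i cx)

/-- `tcomp(ρ)`: the set of timed computations (from `c₀`) inducing the s-path `ρ`. -/
def tcomp {A : ConjPNTA k} {n : Fin k → ℕ} (c₀ : Config A n) (ρ : SPath A n) :
    Set (TimedComp A n c₀) :=
  {x | Induces x ρ}

/-- `|ρ| = ω` : `ρ` is (induced by) an infinite timed computation from `c₀`. -/
def SPath.IsInfiniteFrom {A : ConjPNTA k} {n : Fin k → ℕ} (c₀ : Config A n) (ρ : SPath A n) : Prop :=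
  ∃ x : TimedComp A n c₀, Induces x ρ ∧ x.Infinite

/-- `|ρ| < ω` : `ρ` is induced by a finite timed computation from `c₀`. -/
def SPath.IsFiniteFrom {A : ConjPNTA k} {n : Fin k → ℕ} (c₀ : Config A n) (ρ : SPath A n) : Prop :=
  ∃ x : TimedComp A n c₀, Induces x ρ ∧ x.Finite

/-- `deadlock(ρ)` : `ρ` is induced by a deadlocked timed computation from `c₀`. -/
def SPath.IsDeadlockedFrom {A : ConjPNTA k} {n : Fin k → ℕ} (c₀ : Config A n) (ρ : SPath A n) : Prop :=
  ∃ x : TimedComp A n c₀, Induces x ρ ∧ x.Deadlocked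

/-! ### IMTL formulae and their continuous-time semantics -/

/-- IMTL path formulae over atomic propositions `α`: built from `⊤` and atoms by
Boolean operators (`∧`, `¬`) and time-constrained until `Φ U_{∼q} Ψ` with
`∼ ∈ {<,≤,>,≥,=}` and `q ∈ ℚ≥0`. -/
inductive IMTL (α : Type) : Type
  | tt
  | atom (a : α)
  | and (φ ψ : IMTL α)
  | not (φ : IMTL α)
  | untl (op : Cmp) (q : ℚ≥0) (φ ψ : IMTL α)

/-- Satisfaction of an IMTL path formula on an s-path, given a valuation of the
atomic propositions on configurations. -/
def satIMTL {A : ConjPNTA k} {n : Fin k → ℕ} {α : Type} (val : α → Config A n → Prop) :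
    IMTL α → SPath A n → Prop
  | .tt, _ => True
  | .atom a, ρ => val a (ρ.toFun 0)
  | .and φ ψ, ρ => satIMTL val φ ρ ∧ satIMTL val ψ ρ
  | .not φ, ρ => ¬ satIMTL val φ ρ
  | .untl op q φ ψ, ρ => ∃ t' : NNReal, (t' : ℝ≥0∞) ≤ ρ.len ∧ op.eval t' (q : NNReal) ∧
      satIMTL val ψ (ρ.suffix t') ∧ ∀ t : NNReal, t < t' → satIMTL val φ (ρ.suffix t)

/-- The six path quantifiers `A, A_inf, A_fin, E, E_inf, E_fin`. -/
inductive PathQ : Type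
  | A | Ainf | Afin | E | Einf | Efin

/-- `(U_1,…,U_k)^{(n_1,…,n_k)} ⊨ Q Φ` for a path quantifier `Q`: quantification over
the s-paths from the initial configuration that are infinite or deadlocked (`A`, `E`),
infinite (`A_inf`, `E_inf`), resp. finite (`A_fin`, `E_fin`). -/
def SatQ (A : ConjPNTA k) (n : Fin k → ℕ) {α : Type} (val : α → Config A n → Prop)
    (Q : PathQ) (Φ : IMTL α) : Prop :=
  match Q with
  | .A => ∀ ρ : SPath A n,
      (ρ.IsInfiniteFrom (initConfig A n) ∨ ρ.IsDeadlockedFrom (initConfig A n)) → satIMTL val Φ ρ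
  | .Ainf => ∀ ρ : SPath A n, ρ.IsInfiniteFrom (initConfig A n) → satIMTL val Φ ρ
  | .Afin => ∀ ρ : SPath A n, ρ.IsFiniteFrom (initConfig A n) → satIMTL val Φ ρ
  | .E => ∃ ρ : SPath A n,
      (ρ.IsInfiniteFrom (initConfig A n) ∨ ρ.IsDeadlockedFrom (initConfig A n)) ∧ satIMTL val Φ ρ
  | .Einf => ∃ ρ : SPath A n, ρ.IsInfiniteFrom (initConfig A n) ∧ satIMTL val Φ ρ
  | .Efin => ∃ ρ : SPath A n, ρ.IsFiniteFrom (initConfig A n) ∧ satIMTL val Φ ρ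

/-- Atomic propositions of the indexed formula `Φ(i_{l₁},…,i_{l_h})`: a quantified
slot `j < h` together with a state (= atomic proposition) of template `l_j`. -/
def Atoms (A : ConjPNTA k) {h : ℕ} (l : Fin h → Fin k) : Type :=
  Σ j : Fin h, A.State (l j)

/-- The valuation of the atoms, given an assignment `inst` of concrete instances to
the quantified slots: `p(l_j, i_{l_j})` holds iff instance `i_{l_j}` of template `l_j`
is in state `p`. -/
def atomVal (A : ConjPNTA k) (n : Fin k → ℕ) {h : ℕ} (l : Fin h → Fin k)
    (inst : ∀ j : Fin h, Fin (n (l j))) : Atoms A l → Config A n → Prop :=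
  fun a c => c.st (l a.1) (inst a.1) = a.2

/-- `(U_1,…,U_k)^{(n_1,…,n_k)} ⊨ ⋀_{i_{l₁},…,i_{l_h}} Q Φ(i_{l₁},…,i_{l_h})`. -/
def SatFormula (A : ConjPNTA k) (n : Fin k → ℕ) {h : ℕ} (l : Fin h → Fin k)
    (Q : PathQ) (Φ : IMTL (Atoms A l)) : Prop :=
  ∀ inst : ∀ j : Fin h, Fin (n (l j)), SatQ A n (atomVal A n l inst) Q Φ

/-! ### Helpers for networks of two templates -/

/-- The size function of the system `(U₁,U₂)^{(a,b)}`. -/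
def two (a b : ℕ) : Fin 2 → ℕ := fun m => if m.val = 0 then a else b

/-- The valuation interpreting the atoms of a formula `Φ(1_t)` over the *first*
instance of template `t`. -/
def valFirst (A : ConjPNTA 2) (n : Fin 2 → ℕ) (t : Fin 2) (hp : 0 < n t) :
    A.State t → Config A n → Prop :=
  fun p c => c.st t ⟨0, hp⟩ = p


/-! ### Cutoffs for two-template systems -/

/-- Cutoff for the template tracked by the formula `Φ(1₂)` (part (i)):
`2` for `E_inf`, `1` for `E_fin`, `2|U₂| + 1` for `E`. -/
def cutoffTracked (A : ConjPNTA 2) : PathQ → ℕ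
  | PathQ.Einf => 2
  | PathQ.Efin => 1
  | PathQ.E => 2 * A.size 1 + 1
  | _ => 1

/-- Cutoff for the untracked template (part (ii)):
`1` for `E_inf`, `1` for `E_fin`, `2|U₂|` for `E`. -/
def cutoffOther (A : ConjPNTA 2) : PathQ → ℕ
  | PathQ.Einf => 1
  | PathQ.Efin => 1
  | PathQ.E => 2 * A.size 1
  | _ => 1

lemma cutoffTracked_pos (A : ConjPNTA 2) (Q : PathQ) : 0 < cutoffTracked A Q := by
  have := A.size_pos 1
  cases Q <;> simp only [cutoffTracked] <;> omega

lemma cutoffOther_pos (A : ConjPNTA 2) (Q : PathQ) : 0 < cutoffOther A Q := by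
  have := A.size_pos 1
  cases Q <;> simp only [cutoffOther] <;> omega

/-! ### Stuttering, reindexings and local computations -/

/-- `y` is a *stuttering* of `x`: it is obtained from `x` by inserting, between
consecutive elements, finitely many intermediate observations of the same states
with clocks advanced by small delays `δ`, without altering the original elements.
The map `m` sends a position of `y` to the position of `x` it refines. -/
def Stuttering {A : ConjPNTA k} {n : Fin k → ℕ} {c₀ : Config A n}
    (y x : TimedComp A n c₀) : Prop :=
  ∃ m : ℕ → ℕ, Monotone m ∧ m 0 = 0 ∧
    (∀ w, (y.seq w).isSome → (x.seq (m w)).isSome) ∧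
    (∀ w, y.seq w = none → ∃ v, x.seq v = none) ∧
    (∀ v, Set.Finite {w | (y.seq w).isSome ∧ m w = v}) ∧
    (∀ v, (x.seq v).isSome → ∃ w, m w = v ∧ y.seq w = x.seq v) ∧
    (∀ w cy ty cx tx, y.seq w = some (cy, ty) → x.seq (m w) = some (cx, tx) →
      tx ≤ ty ∧ cy.st = cx.st ∧ (∀ l i cxk, cy.cl l i cxk = cx.cl l i cxk + (ty - tx)) ∧
      ∀ cx' tx', x.seq (m w + 1) = some (cx', tx') → ty ≤ tx')

/-- A reindexing of positions between a timed computation `x` and a timed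
computation `y` obtained from `x` by collapsing some steps. -/
def Reindex {A : ConjPNTA k} {n n' : Fin k → ℕ} {c₀ : Config A n} {c₀' : Config A n'}
    (x : TimedComp A n c₀) (y : TimedComp A n' c₀') (m : ℕ → ℕ) : Prop :=
  Monotone m ∧ m 0 = 0 ∧
    (∀ v, (x.seq v).isSome → (y.seq (m v)).isSome) ∧
    (∀ w, (y.seq w).isSome → ∃ v, (x.seq v).isSome ∧ m v = w)

/-- The local timed computation of instance `(l, iy)` of `y` coincides (through the
reindexing `m`) with the local timed computation of instance `(l, ix)` of `x`:
same times, same states, same clock values. -/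
def LocalMatch {A : ConjPNTA k} {n n' : Fin k → ℕ} {c₀ : Config A n} {c₀' : Config A n'}
    (x : TimedComp A n c₀) (y : TimedComp A n' c₀') (m : ℕ → ℕ)
    (l : Fin k) (ix : Fin (n l)) (iy : Fin (n' l)) : Prop :=
  ∀ v c t c' t', x.seq v = some (c, t) → y.seq (m v) = some (c', t') →
    t' = t ∧ c'.st l iy = c.st l ix ∧ c'.cl l iy = c.cl l ix

/-- Instance `(l, i)` of `y` follows the idle local computation: it stutters in the
initial state `ŝ_l` with all its clocks equal to the elapsed time. -/
def IdleLocal {A : ConjPNTA k} {n : Fin k → ℕ} {c₀ : Config A n}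
    (y : TimedComp A n c₀) (l : Fin k) (i : Fin (n l)) : Prop :=
  ∀ v c t, y.seq v = some (c, t) → c.st l i = A.init l ∧ ∀ cx, c.cl l i cx = t

/-- The local computation of instance `(l, i)` of `x` is infinite: the instance takes
infinitely many (observable) synchronization steps. -/
def LocalInfinite {A : ConjPNTA k} {n : Fin k → ℕ} {c₀ : Config A n}
    (x : TimedComp A n c₀) (l : Fin k) (i : Fin (n l)) : Prop :=
  ∀ N, ∃ v, N ≤ v ∧ ∃ c t c' t', x.seq v = some (c, t) ∧ x.seq (v + 1) = some (c', t') ∧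
    t' = t ∧ ¬ (c'.st l i = c.st l i ∧ c'.cl l i = c.cl l i)

lemma two_le_two_succ (n : ℕ) (l : Fin 2) : two 1 n l ≤ two 1 (n + 1) l := by
  unfold two; split <;> omega

lemma c2two (A : ConjPNTA 2) {c₂ : ℕ} (hc : c₂ = 2 ∨ c₂ = 2 * A.size 1 + 1) : 1 < c₂ := by
  have := A.size_pos 1
  rcases hc with h | h <;> omega

lemma c2pos (A : ConjPNTA 2) {c₂ : ℕ} (hc : c₂ = 2 ∨ c₂ = 2 * A.size 1 + 1) : 0 < c₂ :=
  Nat.lt_of_lt_of_le Nat.one_pos (Nat.le_of_lt (c2two A hc))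

lemma npos (A : ConjPNTA 2) {c₂ n : ℕ} (hc : c₂ = 2 ∨ c₂ = 2 * A.size 1 + 1) (hn : c₂ ≤ n) :
    0 < n := Nat.lt_of_lt_of_le (c2pos A hc) hn

/-! ### Auxiliary development for monotonicity -/

section AuxMono

variable {A : ConjPNTA 2} {n : ℕ}

lemma Config.ext' {k : ℕ} {A : ConjPNTA k} {m : Fin k → ℕ} {c c' : Config A m}
    (h1 : ∀ l i, c.st l i = c'.st l i) (h2 : ∀ l i x, c.cl l i x = c'.cl l i x) : c = c' := by
  obtain ⟨st, cl, hi⟩ := c; obtain ⟨st', cl', hi'⟩ := c'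
  have e1 : st = st' := funext fun l => funext fun i => h1 l i
  subst e1
  have e2 : cl = cl' := funext fun l => funext fun i => funext fun x => h2 l i x
  subst e2
  rfl

/-- Embedding of instances of the `(1,n)` system into the `(1,n+1)` system. -/
def embF (n : ℕ) (l : Fin 2) (i : Fin (two 1 n l)) : Fin (two 1 (n + 1) l) :=
  ⟨i.val, lt_of_lt_of_le i.isLt (two_le_two_succ n l)⟩

lemma embF_eta {l : Fin 2} {i : Fin (two 1 (n + 1) l)} (h : i.val < two 1 n l) :
    embF n l ⟨i.val, h⟩ = i := rfl

/-- Augment a configuration of the `(1,n)` system with an extra idle instance of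
template `1` in its initial state with all clocks equal to `t`. -/
def aug (A : ConjPNTA 2) (n : ℕ) (c : Config A (two 1 n)) (t : NNReal) :
    Config A (two 1 (n + 1)) where
  st := fun l j => if h : j.val < two 1 n l then c.st l ⟨j.val, h⟩ else A.init l
  cl := fun l j => if h : j.val < two 1 n l then c.cl l ⟨j.val, h⟩ else fun _ => t
  inv_sat := fun l j => by
    by_cases h : j.val < two 1 n l
    · simpa only [dif_pos h] using c.inv_sat l ⟨j.val, h⟩
    · simp only [dif_neg h, A.inv_init]; trivial

/-- Restriction of a configuration of the `(1,n+1)` system to the `(1,n)` system. -/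
def restr (A : ConjPNTA 2) (n : ℕ) (C : Config A (two 1 (n + 1))) : Config A (two 1 n) where
  st := fun l i => C.st l (embF n l i)
  cl := fun l i => C.cl l (embF n l i)
  inv_sat := fun l i => C.inv_sat l (embF n l i)

lemma aug_st_emb (c : Config A (two 1 n)) (t : NNReal) (l : Fin 2) (i : Fin (two 1 n l)) :
    (aug A n c t).st l (embF n l i) = c.st l i := by
  simp only [aug, embF, dif_pos i.isLt]

lemma aug_cl_emb (c : Config A (two 1 n)) (t : NNReal) (l : Fin 2) (i : Fin (two 1 n l)) :
    (aug A n c t).cl l (embF n l i) = c.cl l i := by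
  simp only [aug, embF, dif_pos i.isLt]

lemma restr_aug (c : Config A (two 1 n)) (t : NNReal) : restr A n (aug A n c t) = c :=
  Config.ext' (fun l i => aug_st_emb c t l i) (fun l i x => congrFun (aug_cl_emb c t l i) x)

lemma aug_init : aug A n (initConfig A (two 1 n)) 0 = initConfig A (two 1 (n + 1)) := by
  apply Config.ext'
  · intro l i; by_cases h : i.val < two 1 n l <;> simp [aug, initConfig, h]
  · intro l i x; by_cases h : i.val < two 1 n l <;> simp [aug, initConfig, h]

lemma sigma_emb_eq {p q : Σ h : Fin 2, Fin (two 1 n h)}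
    (h : (⟨p.1, embF n p.1 p.2⟩ : Σ h : Fin 2, Fin (two 1 (n + 1) h)) =
      ⟨q.1, embF n q.1 q.2⟩) : p = q := by
  obtain ⟨pl, pi⟩ := p; obtain ⟨ql, qi⟩ := q
  dsimp only at h
  injection h with h1 h2
  subst h1
  have h2' : embF n pl pi = embF n pl qi := eq_of_heq h2
  have hv := congrArg Fin.val h2'
  have he : pi = qi := Fin.ext hv
  rw [he]

lemma delayStep_aug {c c' : Config A (two 1 n)} {d : NNReal} (h : DelayStep d c c')
    (t : NNReal) : DelayStep d (aug A n c t) (aug A n c' (t + d)) := by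
  obtain ⟨h1, h2, h3⟩ := h
  refine ⟨?_, ?_, ?_⟩
  · funext l j
    by_cases hj : j.val < two 1 n l <;> simp [aug, hj, h1]
  · intro l j x
    by_cases hj : j.val < two 1 n l <;> simp [aug, hj, h2]
  · intro l j d' hd'
    by_cases hj : j.val < two 1 n l
    · have := h3 l ⟨j.val, hj⟩ d' hd'
      simpa only [aug, dif_pos hj] using this
    · simp only [aug, dif_neg hj, A.inv_init]; trivial

lemma syncStep_aug {c c' : Config A (two 1 n)} (h : SyncStep c c') (t : NNReal) :
    SyncStep (aug A n c t) (aug A n c' t) := by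
  obtain ⟨l, i, tr, htr, hsrc, hclk, hg, hst, hres, hoth⟩ := h
  refine ⟨l, embF n l i, tr, htr, ?_, ?_, ?_, ?_, ?_, ?_⟩
  · rw [aug_st_emb]; exact hsrc
  · rw [aug_cl_emb]; exact hclk
  · intro p hp
    by_cases hpv : p.2.val < two 1 n p.1
    · have hpeq : p = ⟨p.1, embF n p.1 ⟨p.2.val, hpv⟩⟩ := rfl
      have hne : (⟨p.1, ⟨p.2.val, hpv⟩⟩ : Σ h : Fin 2, Fin (two 1 n h)) ≠ ⟨l, i⟩ := by
        intro he
        apply hp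
        rw [hpeq]
        exact congrArg (fun q : Σ h : Fin 2, Fin (two 1 n h) => (⟨q.1, embF n q.1 q.2⟩ :
          Σ h : Fin 2, Fin (two 1 (n + 1) h))) he
      have := hg ⟨p.1, ⟨p.2.val, hpv⟩⟩ hne
      simpa only [aug, dif_pos hpv] using this
    · have : (aug A n c t).st p.1 p.2 = A.init p.1 := by simp only [aug, dif_neg hpv]
      rw [this]
      exact A.guards_conj l tr htr p.1
  · rw [aug_st_emb]; exact hst
  · intro x
    rw [aug_cl_emb, aug_cl_emb]
    exact hres x
  · intro p hp
    by_cases hpv : p.2.val < two 1 n p.1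
    · have hne : (⟨p.1, ⟨p.2.val, hpv⟩⟩ : Σ h : Fin 2, Fin (two 1 n h)) ≠ ⟨l, i⟩ := by
        intro he
        apply hp
        exact congrArg (fun q : Σ h : Fin 2, Fin (two 1 n h) => (⟨q.1, embF n q.1 q.2⟩ :
          Σ h : Fin 2, Fin (two 1 (n + 1) h))) he
      obtain ⟨e1, e2⟩ := hoth ⟨p.1, ⟨p.2.val, hpv⟩⟩ hne
      constructor
      · simp only [aug, dif_pos hpv]; exact e1
      · simp only [aug, dif_pos hpv]; exact e2
    · constructor <;> simp only [aug, dif_neg hpv]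

lemma step_aug {c c' : Config A (two 1 n)} {t t' : NNReal} (h : Step c c' t t') :
    Step (aug A n c t) (aug A n c' t') t t' := by
  rcases h with ⟨d, hd, hds, rfl⟩ | ⟨hs, rfl⟩
  · exact Or.inl ⟨d, hd, delayStep_aug hds t, rfl⟩
  · exact Or.inr ⟨syncStep_aug hs _, rfl⟩

end AuxMono
section AuxMono2

variable {A : ConjPNTA 2} {n : ℕ}

lemma opt_isSome_map {α β : Type*} (f : α → β) (o : Option α) :
    (o.map f).isSome = o.isSome := by cases o <;> rfl

/-- The augmented timed computation: run `x` with an extra idle instance. -/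
def augComp (x : TimedComp A (two 1 n) (initConfig A (two 1 n))) :
    TimedComp A (two 1 (n + 1)) (initConfig A (two 1 (n + 1))) where
  seq v := (x.seq v).map fun p => (aug A n p.1 p.2, p.2)
  zero_def := by rw [x.zero_def, Option.map_some, aug_init]
  downward := by
    intro v h
    rw [opt_isSome_map] at h ⊢
    exact x.downward v h
  step := by
    intro v c t c' t' h h'
    rw [Option.map_eq_some_iff] at h h'
    obtain ⟨p, hp, he⟩ := h
    obtain ⟨p', hp', he'⟩ := h'
    injection he with hc ht
    injection he' with hc' ht'
    subst hc; subst ht; subst hc'; subst ht'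
    exact step_aug (x.step v p.1 p.2 p'.1 p'.2 (by rw [hp]) (by rw [hp']))

lemma augComp_seq (x : TimedComp A (two 1 n) (initConfig A (two 1 n))) (v : ℕ) :
    (augComp x).seq v = (x.seq v).map fun p => (aug A n p.1 p.2, p.2) := rfl

lemma augComp_timeAt (x : TimedComp A (two 1 n) (initConfig A (two 1 n))) (v : ℕ) :
    (augComp x).timeAt v = x.timeAt v := by
  unfold TimedComp.timeAt
  rw [augComp_seq]
  cases x.seq v <;> rfl

/-- The augmented s-path. -/
def augPath (ρ : SPath A (two 1 n)) : SPath A (two 1 (n + 1)) :=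
  ⟨ρ.len, fun s => aug A n (ρ.toFun s) s⟩

lemma aug_match {c : Config A (two 1 n)} {t s : NNReal} {e : Config A (two 1 n)}
    (hst : e.st = c.st) (hcl : ∀ l i cx, e.cl l i cx = c.cl l i cx + (s - t))
    (hts : t ≤ s) :
    (aug A n e s).st = (aug A n c t).st ∧
      ∀ l i cx, (aug A n e s).cl l i cx = (aug A n c t).cl l i cx + (s - t) := by
  constructor
  · funext l j
    by_cases hj : j.val < two 1 n l <;> simp [aug, hj, hst]
  · intro l j cx
    by_cases hj : j.val < two 1 n l
    · simp only [aug, dif_pos hj]; exact hcl l ⟨j.val, hj⟩ cx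
    · simp only [aug, dif_neg hj]
      exact (add_tsub_cancel_of_le hts).symm

lemma induces_augComp {x : TimedComp A (two 1 n) (initConfig A (two 1 n))}
    {ρ : SPath A (two 1 n)} (h : Induces x ρ) : Induces (augComp x) (augPath ρ) := by
  obtain ⟨h1, h2, h3⟩ := h
  refine ⟨?_, ?_, ?_⟩
  · intro v c t c' t' hv hv' s hs hs'
    rw [augComp_seq, Option.map_eq_some_iff] at hv hv'
    obtain ⟨p, hp, he⟩ := hv
    obtain ⟨p', hp', he'⟩ := hv'
    injection he with hc ht
    injection he' with hc' ht'
    subst hc; subst ht; subst hc'; subst ht'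
    obtain ⟨ha, hb⟩ := h1 v p.1 p.2 p'.1 p'.2 (by rw [hp]) (by rw [hp']) s hs hs'
    exact aug_match ha hb hs
  · intro hinf
    have hxinf : x.Infinite := by
      intro v
      have := hinf v
      rw [augComp_seq, opt_isSome_map] at this
      exact this
    show ρ.len = _
    rw [h2 hxinf]
    exact congrArg _ (funext fun v => by rw [augComp_timeAt])
  · intro v c t hv hv'
    rw [augComp_seq, Option.map_eq_some_iff] at hv
    obtain ⟨p, hp, he⟩ := hv
    injection he with hc ht
    subst hc; subst ht
    rw [augComp_seq, Option.map_eq_none_iff] at hv'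
    obtain ⟨hl, hst, hcl⟩ := h3 v p.1 p.2 (by rw [hp]) hv'
    refine ⟨hl, ?_, ?_⟩
    · show (aug A n (ρ.toFun p.2) p.2).st = _
      funext l j
      by_cases hj : j.val < two 1 n l <;> simp [aug, hj, hst]
    · intro l j cx
      show (aug A n (ρ.toFun p.2) p.2).cl l j cx = _
      by_cases hj : j.val < two 1 n l
      · simp only [aug, dif_pos hj]; exact hcl l ⟨j.val, hj⟩ cx
      · simp only [aug, dif_neg hj]

lemma augComp_infinite {x : TimedComp A (two 1 n) (initConfig A (two 1 n))}
    (h : x.Infinite) : (augComp x).Infinite := by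
  intro v
  rw [augComp_seq, opt_isSome_map]
  exact h v

lemma augComp_finite {x : TimedComp A (two 1 n) (initConfig A (two 1 n))}
    (h : x.Finite) : (augComp x).Finite := by
  obtain ⟨v, hv⟩ := h
  exact ⟨v, by rw [augComp_seq, hv]; rfl⟩

end AuxMono2
section AuxMono3

variable {A : ConjPNTA 2} {n : ℕ}

lemma aug_st00 (c : Config A (two 1 n)) (u : NNReal) :
    (aug A n c u).st 0 ⟨0, Nat.one_pos⟩ = c.st 0 ⟨0, Nat.one_pos⟩ := by
  have h0 : (0 : ℕ) < two 1 n 0 := Nat.one_pos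
  simp only [aug, dif_pos h0]

/-- Satisfaction of an IMTL formula over the first instance of template `0` only
depends on the length and on the state of that instance within the length. -/
lemma sat_transfer (Φ : IMTL (A.State 0)) :
    ∀ (ρ : SPath A (two 1 n)) (ρ' : SPath A (two 1 (n + 1))),
      ρ'.len = ρ.len →
      (∀ s : NNReal, (s : ℝ≥0∞) ≤ ρ.len →
        (ρ'.toFun s).st 0 ⟨0, Nat.one_pos⟩ = (ρ.toFun s).st 0 ⟨0, Nat.one_pos⟩) →
      (satIMTL (valFirst A (two 1 n) 0 Nat.one_pos) Φ ρ ↔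
        satIMTL (valFirst A (two 1 (n + 1)) 0 Nat.one_pos) Φ ρ') := by
  induction Φ with
  | tt => intro ρ ρ' _ _; simp [satIMTL]
  | atom a =>
    intro ρ ρ' hlen hag
    simp only [satIMTL, valFirst]
    rw [hag 0 (zero_le)]
  | and φ ψ ihφ ihψ =>
    intro ρ ρ' hlen hag
    simp only [satIMTL]
    rw [ihφ ρ ρ' hlen hag, ihψ ρ ρ' hlen hag]
  | not φ ih =>
    intro ρ ρ' hlen hag
    simp only [satIMTL]
    rw [ih ρ ρ' hlen hag]
  | untl op q φ ψ ihφ ihψ =>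
    intro ρ ρ' hlen hag
    have hsuf : ∀ u : NNReal, (u : ℝ≥0∞) ≤ ρ.len →
        (ρ'.suffix u).len = (ρ.suffix u).len ∧
        ∀ s : NNReal, (s : ℝ≥0∞) ≤ (ρ.suffix u).len →
          ((ρ'.suffix u).toFun s).st 0 ⟨0, Nat.one_pos⟩ =
            ((ρ.suffix u).toFun s).st 0 ⟨0, Nat.one_pos⟩ := by
      intro u hu
      refine ⟨by simp [SPath.suffix, hlen], ?_⟩
      intro s hs
      show (ρ'.toFun (u + s)).st 0 _ = (ρ.toFun (u + s)).st 0 _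
      apply hag
      have : ((u + s : NNReal) : ℝ≥0∞) = (u : ℝ≥0∞) + (s : ℝ≥0∞) := by push_cast; ring
      rw [this]
      calc (u : ℝ≥0∞) + (s : ℝ≥0∞) ≤ (u : ℝ≥0∞) + (ρ.len - u) := by
            exact add_le_add le_rfl hs
        _ = ρ.len := add_tsub_cancel_of_le hu
    simp only [satIMTL, hlen]
    apply exists_congr
    intro t'
    apply and_congr_right
    intro ht'
    apply and_congr_right
    intro _
    obtain ⟨hl', hag'⟩ := hsuf t' ht'
    apply and_congr
    · exact (ihψ (ρ.suffix t') (ρ'.suffix t') hl' hag').symm.symm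
    · apply forall_congr'
      intro s
      apply imp_congr_right
      intro hs
      have hsle : ((s : NNReal) : ℝ≥0∞) ≤ ρ.len :=
        le_trans (by exact_mod_cast le_of_lt hs) ht'
      obtain ⟨hl2, hag2⟩ := hsuf s hsle
      exact ihφ (ρ.suffix s) (ρ'.suffix s) hl2 hag2

lemma seq_some_add {k : ℕ} {A : ConjPNTA k} {m : Fin k → ℕ} {c₀ : Config A m}
    (x : TimedComp A m c₀) : ∀ (d w : ℕ), (x.seq (w + d)).isSome → (x.seq w).isSome := by
  intro d
  induction d with
  | zero => intro w h; simpa using h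
  | succ d ih =>
    intro w h
    exact ih w (x.downward (w + d) (by rwa [Nat.add_succ] at h))

/-- Positions below a defined position are defined. -/
lemma seq_some_of_le {k : ℕ} {A : ConjPNTA k} {m : Fin k → ℕ} {c₀ : Config A m}
    (x : TimedComp A m c₀) {v w : ℕ} (hvw : w ≤ v) (hv : (x.seq v).isSome) :
    (x.seq w).isSome := by
  obtain ⟨d, rfl⟩ := Nat.exists_eq_add_of_le hvw
  exact seq_some_add x d w hv

lemma time_le_step {k : ℕ} {A : ConjPNTA k} {m : Fin k → ℕ} {c₀ : Config A m}
    (x : TimedComp A m c₀) {v : ℕ} {c1 c2 : Config A m} {t1 t2 : NNReal}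
    (h1 : x.seq v = some (c1, t1)) (h2 : x.seq (v + 1) = some (c2, t2)) : t1 ≤ t2 := by
  rcases x.step v c1 t1 c2 t2 h1 h2 with ⟨d, hd, _, rfl⟩ | ⟨_, rfl⟩
  · exact le_self_add
  · exact le_rfl

lemma time_mono_add {k : ℕ} {A : ConjPNTA k} {m : Fin k → ℕ} {c₀ : Config A m}
    (x : TimedComp A m c₀) : ∀ (d v : ℕ) (c1 : Config A m) (t1 : NNReal) (c2 : Config A m)
    (t2 : NNReal), x.seq v = some (c1, t1) → x.seq (v + d) = some (c2, t2) → t1 ≤ t2 := by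
  intro d
  induction d with
  | zero =>
    intro v c1 t1 c2 t2 h1 h2
    rw [Nat.add_zero, h1] at h2
    injection h2 with h2
    injection h2 with _ h2
    exact le_of_eq h2
  | succ d ih =>
    intro v c1 t1 c2 t2 h1 h2
    have hs : (x.seq (v + d)).isSome := x.downward _ (by rw [Nat.add_succ] at h2; rw [h2]; rfl)
    obtain ⟨p, hp⟩ := Option.isSome_iff_exists.mp hs
    refine le_trans (ih v c1 t1 p.1 p.2 h1 (by rw [hp])) ?_
    exact time_le_step x (v := v + d) (by rw [hp]) (by rwa [Nat.add_succ] at h2)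

lemma time_mono_le {k : ℕ} {A : ConjPNTA k} {m : Fin k → ℕ} {c₀ : Config A m}
    (x : TimedComp A m c₀) {v w : ℕ} (hvw : w ≤ v) {c1 c2 : Config A m} {t1 t2 : NNReal}
    (h1 : x.seq w = some (c1, t1)) (h2 : x.seq v = some (c2, t2)) : t1 ≤ t2 := by
  obtain ⟨d, rfl⟩ := Nat.exists_eq_add_of_le hvw
  exact time_mono_add x d w c1 t1 c2 t2 h1 h2
end AuxMono3
section AuxMono4

variable {A : ConjPNTA 2} {n : ℕ}

lemma delay_proj {C C' : Config A (two 1 (n + 1))} {d : NNReal}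
    (h : DelayStep d C C') : DelayStep d (restr A n C) (restr A n C') := by
  obtain ⟨h1, h2, h3⟩ := h
  refine ⟨?_, ?_, ?_⟩
  · funext l i
    exact congrFun (congrFun h1 l) (embF n l i)
  · intro l i x
    exact h2 l (embF n l i) x
  · intro l i d' hd'
    exact h3 l (embF n l i) d' hd'

/-- If the `(1,n)` system is deadlocked at `c` and `C` restricts to `c`, then any
synchronization step from `C` is taken by the extra instance, hence preserves the
restriction. -/
lemma sync_restr {c : Config A (two 1 n)}
    (hdead : ∀ c' : Config A (two 1 n),
      ¬ ((∃ d : NNReal, 0 < d ∧ DelayStep d c c') ∨ SyncStep c c'))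
    {C C' : Config A (two 1 (n + 1))} (hC : restr A n C = c) (hs : SyncStep C C') :
    restr A n C' = c := by
  obtain ⟨l, i, tr, htr, hsrc, hclk, hg, hst, hres, hoth⟩ := hs
  by_cases hi : i.val < two 1 n l
  · exfalso
    apply hdead (restr A n C')
    right
    have hemb : embF n l ⟨i.val, hi⟩ = i := rfl
    refine ⟨l, ⟨i.val, hi⟩, tr, htr, ?_, ?_, ?_, ?_, ?_, ?_⟩
    · rw [← hC]; exact hsrc
    · rw [← hC]; exact hclk
    · intro p hp
      rw [← hC]
      refine hg ⟨p.1, embF n p.1 p.2⟩ ?_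
      intro he
      apply hp
      have := sigma_emb_eq (p := p) (q := ⟨l, ⟨i.val, hi⟩⟩) (by rw [he]; rfl)
      exact this
    · exact hst
    · rw [← hC]; exact fun x => hres x
    · intro p hp
      have hne : (⟨p.1, embF n p.1 p.2⟩ : Σ h : Fin 2, Fin (two 1 (n + 1) h)) ≠ ⟨l, i⟩ := by
        intro he
        exact hp (sigma_emb_eq (p := p) (q := ⟨l, ⟨i.val, hi⟩⟩) (by rw [he]; rfl))
      obtain ⟨e1, e2⟩ := hoth ⟨p.1, embF n p.1 p.2⟩ hne
      rw [← hC]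
      exact ⟨e1, e2⟩
  · rw [← hC]
    apply Config.ext'
    · intro l' i'
      have hne : (⟨l', embF n l' i'⟩ : Σ h : Fin 2, Fin (two 1 (n + 1) h)) ≠ ⟨l, i⟩ := by
        intro he
        injection he with h1 h2
        subst h1
        apply hi
        rw [← eq_of_heq h2]
        exact i'.isLt
      exact (hoth ⟨l', embF n l' i'⟩ hne).1
    · intro l' i' x
      have hne : (⟨l', embF n l' i'⟩ : Σ h : Fin 2, Fin (two 1 (n + 1) h)) ≠ ⟨l, i⟩ := by
        intro he
        injection he with h1 h2
        subst h1
        apply hi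
        rw [← eq_of_heq h2]
        exact i'.isLt
      exact congrFun (hoth ⟨l', embF n l' i'⟩ hne).2 x

open Classical in
/-- Pick an arbitrary synchronization successor, if one exists. -/
noncomputable def succF (A : ConjPNTA 2) (n : ℕ) (C : Config A (two 1 (n + 1))) :
    Option (Config A (two 1 (n + 1))) :=
  if h : ∃ C', SyncStep C C' then some h.choose else none

lemma succF_spec {C C' : Config A (two 1 (n + 1))} (h : succF A n C = some C') :
    SyncStep C C' := by
  unfold succF at h
  split at h
  · injection h with h'
    exact h' ▸ Exists.choose_spec ‹_›
  · cases h

lemma succF_none {C : Config A (two 1 (n + 1))} (h : succF A n C = none) :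
    ¬ ∃ C', SyncStep C C' := by
  unfold succF at h
  split at h
  · cases h
  · assumption

/-- Iterated successors. -/
noncomputable def contF (A : ConjPNTA 2) (n : ℕ) (C₀ : Config A (two 1 (n + 1))) :
    ℕ → Option (Config A (two 1 (n + 1)))
  | 0 => some C₀
  | k + 1 => (contF A n C₀ k).bind (succF A n)

lemma contF_none_mono {C₀ : Config A (two 1 (n + 1))} {j : ℕ} (h : contF A n C₀ j = none) :
    ∀ m, j ≤ m → contF A n C₀ m = none := by
  intro m hjm
  obtain ⟨d, rfl⟩ := Nat.exists_eq_add_of_le hjm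
  induction d with
  | zero => simpa using h
  | succ d ih =>
    show (contF A n C₀ (j + d)).bind _ = none
    rw [ih (Nat.le_add_right j d)]
    rfl

lemma contF_restr {c : Config A (two 1 n)} {t : NNReal}
    (hdead : ∀ c' : Config A (two 1 n),
      ¬ ((∃ d : NNReal, 0 < d ∧ DelayStep d c c') ∨ SyncStep c c')) :
    ∀ (m : ℕ) (C : Config A (two 1 (n + 1))),
      contF A n (aug A n c t) m = some C → restr A n C = c := by
  intro m
  induction m with
  | zero =>
    intro C hC
    injection hC with hC
    rw [← hC]
    exact restr_aug c t
  | succ m ih =>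
    intro C hC
    rw [contF, Option.bind_eq_some_iff] at hC
    obtain ⟨D, hD, hDC⟩ := hC
    exact sync_restr hdead (ih D hD) (succF_spec hDC)

end AuxMono4
section AuxMono5

variable {A : ConjPNTA 2} {n : ℕ}

lemma timeAt_eq {k : ℕ} {A : ConjPNTA k} {m : Fin k → ℕ} {c₀ : Config A m}
    (x : TimedComp A m c₀) {v : ℕ} {c : Config A m} {t : NNReal}
    (h : x.seq v = some (c, t)) : x.timeAt v = t := by
  unfold TimedComp.timeAt
  rw [h]
  rfl

variable (x : TimedComp A (two 1 n) (initConfig A (two 1 n)))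
  (V : ℕ) (c : Config A (two 1 n)) (t : NNReal)

/-- The sequence of the augmented computation, extended beyond the deadlock
position `V` by arbitrary moves of the extra instance. -/
noncomputable def extSeq (w : ℕ) : Option (Config A (two 1 (n + 1)) × NNReal) :=
  if w ≤ V then (x.seq w).map (fun p => (aug A n p.1 p.2, p.2))
  else (contF A n (aug A n c t) (w - V)).map (fun C => (C, t))

lemma extSeq_cont (hV : x.seq V = some (c, t)) (m : ℕ) :
    extSeq x V c t (V + m) = (contF A n (aug A n c t) m).map (fun C => (C, t)) := by
  cases m with
  | zero => simp [extSeq, hV, contF]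
  | succ m =>
    rw [extSeq, if_neg (by omega), Nat.add_sub_cancel_left]

lemma extSeq_time (hV : x.seq V = some (c, t)) {w : ℕ} (hVw : V ≤ w)
    {cv : Config A (two 1 (n + 1))} {tv : NNReal}
    (hw : extSeq x V c t w = some (cv, tv)) : tv = t := by
  obtain ⟨m, rfl⟩ := Nat.exists_eq_add_of_le hVw
  rw [extSeq_cont x V c t hV m, Option.map_eq_some_iff] at hw
  obtain ⟨C, _, he⟩ := hw
  injection he with _ e2
  exact e2.symm

/-- The extended computation. -/
noncomputable def extComp (hV : x.seq V = some (c, t)) (hV1 : x.seq (V + 1) = none) :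
    TimedComp A (two 1 (n + 1)) (initConfig A (two 1 (n + 1))) where
  seq := extSeq x V c t
  zero_def := by
    rw [extSeq, if_pos (Nat.zero_le V), x.zero_def, Option.map_some, aug_init]
  downward := by
    intro w h
    by_cases h1 : w + 1 ≤ V
    · rw [extSeq, if_pos h1] at h
      rw [extSeq, if_pos (by omega)]
      rw [opt_isSome_map] at h ⊢
      exact x.downward w h
    · by_cases h2 : w ≤ V
      · rw [extSeq, if_pos h2]
        have hwV : w = V := by omega
        rw [hwV, hV]
        rfl
      · rw [extSeq, if_neg h1] at h
        rw [extSeq, if_neg h2]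
        rw [opt_isSome_map] at h ⊢
        rw [show w + 1 - V = (w - V) + 1 from by omega, contF] at h
        cases hc : contF A n (aug A n c t) (w - V)
        · rw [hc] at h; simp at h
        · rfl
  step := by
    intro v cv tv cv' tv' h h'
    by_cases h1 : v + 1 ≤ V
    · rw [extSeq, if_pos h1, Option.map_eq_some_iff] at h'
      rw [extSeq, if_pos (by omega), Option.map_eq_some_iff] at h
      obtain ⟨p, hp, he⟩ := h
      obtain ⟨p', hp', he'⟩ := h'
      injection he with e1 e2
      injection he' with e1' e2'
      subst e1; subst e2; subst e1'; subst e2'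
      exact step_aug (x.step v p.1 p.2 p'.1 p'.2 (by rw [hp]) (by rw [hp']))
    · by_cases h2 : v ≤ V
      · obtain rfl : v = V := by omega
        rw [extSeq, if_pos le_rfl, hV, Option.map_some] at h
        injection h with h
        injection h with e1 e2
        rw [extSeq, if_neg h1, show v + 1 - v = 1 from by omega, contF, contF,
          Option.bind_some, Option.map_eq_some_iff] at h'
        obtain ⟨C, hC, he'⟩ := h'
        injection he' with e1' e2'
        subst e1'; subst e2'
        rw [← e1, ← e2]
        exact Or.inr ⟨succF_spec hC, rfl⟩
      · rw [extSeq, if_neg h2, Option.map_eq_some_iff] at h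
        rw [extSeq, if_neg h1, show v + 1 - V = (v - V) + 1 from by omega, contF,
          Option.map_eq_some_iff] at h'
        obtain ⟨C, hC, he⟩ := h
        obtain ⟨C', hC', he'⟩ := h'
        injection he with e1 e2
        injection he' with e1' e2'
        subst e1; subst e2; subst e1'; subst e2'
        rw [hC, Option.bind_some] at hC'
        exact Or.inr ⟨succF_spec hC', rfl⟩

lemma extComp_seq (hV : x.seq V = some (c, t)) (hV1 : x.seq (V + 1) = none) (w : ℕ) :
    (extComp x V c t hV hV1).seq w = extSeq x V c t w := rfl

/-- Condition (1) of `Induces` for the extended computation. -/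
lemma extComp_ind1 {ρ : SPath A (two 1 n)} (hx : Induces x ρ)
    (hV : x.seq V = some (c, t))
    (f : NNReal → Config A (two 1 (n + 1)))
    (hf : ∀ s : NNReal, s < t → f s = aug A n (ρ.toFun s) s) :
    ∀ (v : ℕ) c1 (t1 : NNReal) c1' (t1' : NNReal),
      extSeq x V c t v = some (c1, t1) → extSeq x V c t (v + 1) = some (c1', t1') →
      ∀ s : NNReal, t1 ≤ s → s < t1' →
        (f s).st = c1.st ∧ ∀ l i cx, (f s).cl l i cx = c1.cl l i cx + (s - t1) := by
  intro v c1 t1 c1' t1' h h' s hs hs'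
  by_cases h1 : v + 1 ≤ V
  · rw [extSeq, if_pos h1, Option.map_eq_some_iff] at h'
    rw [extSeq, if_pos (by omega), Option.map_eq_some_iff] at h
    obtain ⟨p, hp, he⟩ := h
    obtain ⟨p', hp', he'⟩ := h'
    injection he with e1 e2
    injection he' with e1' e2'
    subst e1; subst e2; subst e1'; subst e2'
    obtain ⟨ha, hb⟩ := hx.1 v p.1 p.2 p'.1 p'.2 (by rw [hp]) (by rw [hp']) s hs hs'
    have ht1' : p'.2 ≤ t := time_mono_le x h1 (by rw [hp']) hV
    rw [hf s (lt_of_lt_of_le hs' ht1')]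
    exact aug_match ha hb hs
  · have hVv : V ≤ v := by omega
    have e1 := extSeq_time x V c t hV hVv h
    have e2 := extSeq_time x V c t hV (by omega) h'
    subst e1
    rw [e2] at hs'
    exact absurd (lt_of_le_of_lt hs hs') (lt_irrefl _)

end AuxMono5
section AuxMono6

variable {A : ConjPNTA 2} {n : ℕ}

/-- Transfer of a deadlocked witness from the `(1,n)` system to the `(1,n+1)` system:
the extra instance idles until the deadlock, then moves on its own until it gets stuck
(yielding a deadlocked witness) or forever (yielding an infinite witness). -/
lemma dead_case (Φ : IMTL (A.State 0))
    {x : TimedComp A (two 1 n) (initConfig A (two 1 n))} {ρ : SPath A (two 1 n)}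
    (hind : Induces x ρ) {V : ℕ} {c : Config A (two 1 n)} {t : NNReal}
    (hV : x.seq V = some (c, t)) (hV1 : x.seq (V + 1) = none)
    (hdd : ∀ c' : Config A (two 1 n),
      ¬ ((∃ d : NNReal, 0 < d ∧ DelayStep d c c') ∨ SyncStep c c'))
    (hsatρ : satIMTL (valFirst A (two 1 n) 0 Nat.one_pos) Φ ρ) :
    ∃ ρ' : SPath A (two 1 (n + 1)),
      (ρ'.IsInfiniteFrom (initConfig A (two 1 (n + 1))) ∨
        ρ'.IsDeadlockedFrom (initConfig A (two 1 (n + 1)))) ∧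
      satIMTL (valFirst A (two 1 (n + 1)) 0 Nat.one_pos) Φ ρ' := by
  classical
  obtain ⟨hlen, hstt, hclt⟩ := hind.2.2 V c t hV hV1
  set y := extComp x V c t hV hV1 with hy
  by_cases hfin : ∃ kk, contF A n (aug A n c t) kk = none
  · -- the extra instance eventually gets stuck: deadlocked witness
    have hk : contF A n (aug A n c t) (Nat.find hfin) = none := Nat.find_spec hfin
    have hk0 : Nat.find hfin ≠ 0 := by
      intro h0
      rw [h0] at hk
      exact Option.some_ne_none _ hk
    obtain ⟨k', hkk⟩ : ∃ k', Nat.find hfin = k' + 1 :=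
      ⟨Nat.find hfin - 1, by omega⟩
    rw [hkk] at hk
    obtain ⟨C, hC⟩ : ∃ C, contF A n (aug A n c t) k' = some C := by
      cases hc : contF A n (aug A n c t) k' with
      | none => exact absurd hc (Nat.find_min hfin (by omega))
      | some C => exact ⟨C, rfl⟩
    have hrC : restr A n C = c := contF_restr hdd k' C hC
    have hseqP : y.seq (V + k') = some (C, t) := by
      rw [hy, extComp_seq, extSeq_cont x V c t hV k', hC]; rfl
    have hseqP1 : y.seq (V + k' + 1) = none := by
      rw [hy, extComp_seq, show V + k' + 1 = V + (k' + 1) from rfl,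
        extSeq_cont x V c t hV, hk]; rfl
    have hsuccC : succF A n C = none := by
      rw [contF, hC, Option.bind_some] at hk
      exact hk
    have hnomove : ∀ C' : Config A (two 1 (n + 1)),
        ¬ ((∃ d : NNReal, 0 < d ∧ DelayStep d C C') ∨ SyncStep C C') := by
      intro C' hmv
      rcases hmv with ⟨d, hd, hds⟩ | hs
      · exact hdd (restr A n C') (Or.inl ⟨d, hd, by rw [← hrC]; exact delay_proj hds⟩)
      · exact succF_none hsuccC ⟨C', hs⟩
    have hydead : y.Deadlocked := ⟨V + k', C, t, hseqP, hseqP1, hnomove⟩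
    refine ⟨⟨(t : ℝ≥0∞), fun s => if s < t then aug A n (ρ.toFun s) s else C⟩,
      Or.inr ⟨y, ?_, hydead⟩, ?_⟩
    · refine ⟨extComp_ind1 x V c t hind hV _ (fun s hst => if_pos hst), ?_, ?_⟩
      · intro hinfy
        exfalso
        have := hinfy (V + (k' + 1))
        rw [hy, extComp_seq, extSeq_cont x V c t hV, hk] at this
        exact Bool.noConfusion this
      · intro v c1 t1 h h'
        have hVv : V ≤ v := by
          by_contra hlt
          push_neg at hlt
          rw [hy, extComp_seq, extSeq, if_pos (by omega), Option.map_eq_none_iff] at h'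
          have hvs : (x.seq (v + 1)).isSome :=
            seq_some_of_le x (v := V) (w := v + 1) (by omega) (by rw [hV]; rfl)
          rw [h'] at hvs
          exact Bool.noConfusion hvs
        obtain ⟨m, rfl⟩ := Nat.exists_eq_add_of_le hVv
        rw [hy, extComp_seq, extSeq_cont x V c t hV, Option.map_eq_some_iff] at h
        obtain ⟨D, hD, heD⟩ := h
        injection heD with eD1 eD2
        rw [hy, extComp_seq, show V + m + 1 = V + (m + 1) from rfl,
          extSeq_cont x V c t hV, Option.map_eq_none_iff] at h'
        have hm1 : m = k' := by
          have hub : ¬ (k' + 1 ≤ m) := by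
            intro hle
            rw [contF_none_mono hk m hle] at hD
            exact Option.some_ne_none _ hD.symm
          have hlb : ¬ (m + 1 < k' + 1) := by
            intro hlt
            exact Nat.find_min hfin (by omega) h'
          omega
        subst hm1
        rw [hC] at hD
        injection hD with hD
        subst hD
        refine ⟨by rw [← eD2], ?_, ?_⟩
        · show (if t1 < t then aug A n (ρ.toFun t1) t1 else C).st = c1.st
          rw [← eD2, if_neg (lt_irrefl t), eD1]
        · intro l i cx
          show (if t1 < t then aug A n (ρ.toFun t1) t1 else C).cl l i cx = c1.cl l i cx
          rw [← eD2, if_neg (lt_irrefl t), eD1]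
    · refine (sat_transfer Φ ρ _ hlen.symm ?_).mp hsatρ
      intro s hs
      rw [hlen] at hs
      have hst : s ≤ t := by exact_mod_cast hs
      by_cases hlt : s < t
      · show (if s < t then aug A n (ρ.toFun s) s else C).st 0 _ = _
        rw [if_pos hlt]
        exact aug_st00 _ _
      · obtain rfl : s = t := le_antisymm hst (not_lt.mp hlt)
        show (if s < s then aug A n (ρ.toFun s) s else C).st 0 _ = _
        rw [if_neg hlt]
        have h1 : C.st 0 ⟨0, Nat.one_pos⟩ = c.st 0 ⟨0, Nat.one_pos⟩ := by
          rw [← hrC]; rfl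
        rw [h1, ← hstt]
  · -- the extra instance moves forever: infinite witness
    push_neg at hfin
    have hyinf : y.Infinite := by
      intro w
      by_cases hw : w ≤ V
      · rw [hy, extComp_seq, extSeq, if_pos hw, opt_isSome_map]
        exact seq_some_of_le x hw (by rw [hV]; rfl)
      · rw [hy, extComp_seq, extSeq, if_neg hw, opt_isSome_map]
        exact Option.ne_none_iff_isSome.mp (hfin _)
    refine ⟨⟨(t : ℝ≥0∞), fun s => if s < t then aug A n (ρ.toFun s) s
        else aug A n (ρ.toFun t) t⟩, Or.inl ⟨y, ?_, hyinf⟩, ?_⟩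
    · refine ⟨extComp_ind1 x V c t hind hV _ (fun s hst => if_pos hst), ?_, ?_⟩
      · intro _
        show (t : ℝ≥0∞) = ⨆ w, _
        apply le_antisymm
        · have hVt : y.timeAt V = t :=
            timeAt_eq y (by rw [hy, extComp_seq, extSeq, if_pos le_rfl, hV]; rfl)
          calc (t : ℝ≥0∞) = ((y.timeAt V : NNReal) : ℝ≥0∞) := by rw [hVt]
            _ ≤ ⨆ w, ((y.timeAt w : NNReal) : ℝ≥0∞) :=
              le_iSup (fun w => ((y.timeAt w : NNReal) : ℝ≥0∞)) V
        · apply iSup_le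
          intro w
          cases hw : y.seq w with
          | none =>
            have hz : y.timeAt w = 0 := by
              unfold TimedComp.timeAt
              rw [hw]
              rfl
            rw [hz]
            exact zero_le
          | some p =>
            obtain ⟨cw, tw⟩ := p
            rw [timeAt_eq y hw]
            rw [ENNReal.coe_le_coe]
            by_cases hwV : w ≤ V
            · rw [hy, extComp_seq, extSeq, if_pos hwV, Option.map_eq_some_iff] at hw
              obtain ⟨p, hp, hep⟩ := hw
              injection hep with _ e2
              rw [← e2]
              exact time_mono_le x hwV (by rw [hp]) hV
            · rw [hy, extComp_seq] at hw
              exact le_of_eq (extSeq_time x V c t hV (by omega) hw)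
      · intro v c1 t1 h h'
        exfalso
        have := hyinf (v + 1)
        rw [h'] at this
        exact Bool.noConfusion this
    · refine (sat_transfer Φ ρ _ hlen.symm ?_).mp hsatρ
      intro s hs
      rw [hlen] at hs
      have hst : s ≤ t := by exact_mod_cast hs
      by_cases hlt : s < t
      · show (if s < t then aug A n (ρ.toFun s) s else aug A n (ρ.toFun t) t).st 0 _ = _
        rw [if_pos hlt]
        exact aug_st00 _ _
      · obtain rfl : s = t := le_antisymm hst (not_lt.mp hlt)
        show (if s < s then aug A n (ρ.toFun s) s else aug A n (ρ.toFun s) s).st 0 _ = _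
        rw [if_neg hlt]
        exact aug_st00 _ _

end AuxMono6
-- STATEMENT 4
theorem conjunctive_monotonicity_ii (A : ConjPNTA 2) (Φ : IMTL (A.State 0))
    (Q : PathQ) (hQ : Q = PathQ.E ∨ Q = PathQ.Einf ∨ Q = PathQ.Efin)
    (n : ℕ) (hn : 1 ≤ n) :
    SatQ A (two 1 n) (valFirst A (two 1 n) 0 Nat.one_pos) Q Φ →
      SatQ A (two 1 (n + 1)) (valFirst A (two 1 (n + 1)) 0 Nat.one_pos) Q Φ := by
  intro hsat
  rcases hQ with rfl | rfl | rfl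
  · -- Q = E
    obtain ⟨ρ, hpath, hsatρ⟩ := hsat
    rcases hpath with hinf | hdead
    · obtain ⟨x, hind, hxinf⟩ := hinf
      refine ⟨augPath ρ, Or.inl ⟨augComp x, induces_augComp hind, augComp_infinite hxinf⟩, ?_⟩
      exact (sat_transfer Φ ρ (augPath ρ) rfl (fun s _ => aug_st00 _ _)).mp hsatρ
    · obtain ⟨x, hind, hdl⟩ := hdead
      obtain ⟨V, c, t, hV, hV1, hdd⟩ := hdl
      exact dead_case Φ hind hV hV1 hdd hsatρ
  · -- Q = Einf
    obtain ⟨ρ, ⟨x, hind, hxinf⟩, hsatρ⟩ := hsat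
    refine ⟨augPath ρ, ⟨augComp x, induces_augComp hind, augComp_infinite hxinf⟩, ?_⟩
    exact (sat_transfer Φ ρ (augPath ρ) rfl (fun s _ => aug_st00 _ _)).mp hsatρ
  · -- Q = Efin
    obtain ⟨ρ, ⟨x, hind, hxfin⟩, hsatρ⟩ := hsat
    refine ⟨augPath ρ, ⟨augComp x, induces_augComp hind, augComp_finite hxfin⟩, ?_⟩
    exact (sat_transfer Φ ρ (augPath ρ) rfl (fun s _ => aug_st00 _ _)).mp hsatρ

end PNTA
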